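/- arXiv:1810.03680 — 2 statements merged into one kernel-verified Lean document; each statement's English description precedes it below -/
import Mathlib

section
/- Let h(x,y) = b₁x² + b₂xy + b₃y² with b₁, b₂, b₃ ∈ ℤ, let a, q ∈ ℕ with q ≥ 1, and let α = a/q + β with β ∈ ℝ. For M > 0, the double exponential sum ∑_{1≤m,n≤M} e^{2πi h(m,n)α} equals q⁻²·G(a,q)·∫₀^M∫₀^M e^{2πi h(x,y)β} dx dy + O(qM(1 + J M² |β|)), where G(a,q) = ∑_{r,s=0}^{q-1} e^{2πi h(r,s)a/q} and J = |b₁| + |b₂| + |b₃|, with an absolute implied constant. -/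
set_option maxHeartbeats 1600000

open Finset intervalIntegral

lemma lip_e (t s : ℝ) :
    ‖Complex.exp (2*Real.pi*Complex.I*t) - Complex.exp (2*Real.pi*Complex.I*s)‖ ≤ 4*Real.pi*|t-s| := by
  have h1 : Complex.exp (2*Real.pi*Complex.I*t) - Complex.exp (2*Real.pi*Complex.I*s)
      = Complex.exp (((2*Real.pi*s : ℝ) : ℂ) * Complex.I) * (Complex.exp (((2*Real.pi*(t-s) : ℝ) : ℂ) * Complex.I) - 1) := by
    rw [mul_sub, mul_one, ← Complex.exp_add]
    push_cast
    ring_nf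
  rw [h1, norm_mul, Complex.norm_exp_ofReal_mul_I, one_mul]
  set x : ℝ := 2*Real.pi*(t-s) with hx
  have habs : ‖(x:ℂ)*Complex.I‖ = |x| := by simp
  have key : ‖Complex.exp ((x:ℂ)*Complex.I) - 1‖ ≤ 2*|x| := by
    rcases le_or_gt (|x|) 1 with h|h
    · simpa [habs] using Complex.norm_exp_sub_one_le (x := (x:ℂ)*Complex.I) (by rw [habs]; exact h)
    · calc ‖Complex.exp ((x:ℂ)*Complex.I) - 1‖
          ≤ ‖Complex.exp ((x:ℂ)*Complex.I)‖ + ‖(1:ℂ)‖ :=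
            (norm_sub_le _ _)
        _ = 2 := by rw [Complex.norm_exp_ofReal_mul_I]; norm_num
        _ ≤ 2*|x| := by nlinarith
  calc ‖Complex.exp ((x:ℂ)*Complex.I) - 1‖ ≤ 2*|x| := key
    _ = 4*Real.pi*|t-s| := by
        rw [hx, abs_mul, abs_mul]
        rw [abs_of_nonneg (by norm_num : (0:ℝ) ≤ 2), abs_of_nonneg Real.pi_pos.le]
        ring

lemma lip_e' (t s : ℝ) :
    ‖Complex.exp (2*Real.pi*Complex.I*(t:ℂ)) - Complex.exp (2*Real.pi*Complex.I*(s:ℂ))‖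
      ≤ 4*Real.pi*|t-s| := by
  exact lip_e t s

lemma fiber_eq (N q r r' k : ℕ) (hq : 0 < q) (h1 : 1 ≤ r') (h2 : r' ≤ q) (h3 : r' % q = r)
    (hk : k = if r' ≤ N then (N - r')/q + 1 else 0) :
    (Finset.Icc 1 N).filter (fun m => m % q = r) =
      (Finset.range k).image (fun j => r' + j * q) := by
  ext m
  simp only [Finset.mem_filter, Finset.mem_Icc, Finset.mem_image, Finset.mem_range]
  constructor
  · rintro ⟨⟨hm1, hmN⟩, hmod⟩
    have hrm : r' ≤ m := by
      by_contra h
      push_neg at h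
      have hmq : m < q := lt_of_lt_of_le h h2
      have hmm : m % q = m := Nat.mod_eq_of_lt hmq
      rcases Nat.lt_or_ge r' q with h'|h'
      · have : r' % q = r' := Nat.mod_eq_of_lt h'
        omega
      · have hrq : r' = q := le_antisymm h2 h'
        have : r' % q = 0 := by rw [hrq]; exact Nat.mod_self q
        omega
    have hmodeq : r' ≡ m [MOD q] := (h3.trans hmod.symm : r' % q = m % q)
    have hdvd : q ∣ m - r' := (Nat.modEq_iff_dvd' hrm).mp hmodeq
    obtain ⟨j, hj⟩ := hdvd
    have hmeq : m = r' + j * q := by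
      rw [mul_comm j q, ← hj]
      exact (Nat.add_sub_cancel' hrm).symm
    refine ⟨j, ?_, hmeq.symm⟩
    have hrN : r' ≤ N := le_trans hrm hmN
    rw [hk, if_pos hrN]
    have hjq : j * q ≤ N - r' := by
      rw [mul_comm, ← hj]
      exact Nat.sub_le_sub_right hmN r'
    have : j ≤ (N - r')/q := (Nat.le_div_iff_mul_le hq).mpr hjq
    omega
  · rintro ⟨j, hj, rfl⟩
    rw [hk] at hj
    split_ifs at hj with h
    · have hjq : j * q ≤ N - r' :=
        le_trans (Nat.mul_le_mul_right q (by omega)) (Nat.div_mul_le_self _ _)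
      refine ⟨⟨by omega, by omega⟩, ?_⟩
      rw [Nat.add_mul_mod_self_right]
      exact h3
    · omega

lemma lip_continuousOn (F : ℝ → ℂ) (K M : ℝ)
    (hK : ∀ x ∈ Set.Icc (0:ℝ) M, ∀ y ∈ Set.Icc (0:ℝ) M, ‖F x - F y‖ ≤ K * |x - y|) :
    ContinuousOn F (Set.Icc 0 M) := by
  have h : LipschitzOnWith (Real.toNNReal K) F (Set.Icc 0 M) := by
    apply LipschitzOnWith.of_dist_le_mul
    intro x hx y hy
    rw [dist_eq_norm, dist_eq_norm, Real.norm_eq_abs]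
    calc ‖F x - F y‖ ≤ K * |x - y| := hK x hx y hy
      _ ≤ (Real.toNNReal K) * |x - y| :=
          mul_le_mul_of_nonneg_right (Real.le_coe_toNNReal K) (abs_nonneg _)
  exact h.continuousOn

lemma one_dim (F : ℝ → ℂ) (K B M : ℝ) (N q r : ℕ) (hq : 0 < q) (hr : r < q)
    (hM : 0 < M) (hNM : (N:ℝ) ≤ M) (hMN : M < N + 1)
    (hB0 : 0 ≤ B) (hK0 : 0 ≤ K)
    (hB : ∀ x ∈ Set.Icc (0:ℝ) M, ‖F x‖ ≤ B)
    (hK : ∀ x ∈ Set.Icc (0:ℝ) M, ∀ y ∈ Set.Icc (0:ℝ) M, ‖F x - F y‖ ≤ K * |x - y|) :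
    ‖(∑ m ∈ (Finset.Icc 1 N).filter (fun m => m % q = r), F m) -
      (q:ℂ)⁻¹ * ∫ x in (0:ℝ)..M, F x‖ ≤ K*(M+q) + 3*B := by
  have hcont : ContinuousOn F (Set.Icc 0 M) := lip_continuousOn F K M hK
  have hq1 : (1:ℝ) ≤ q := by exact_mod_cast hq
  have hqR : (0:ℝ) < q := by linarith
  have hqC : (q:ℂ) ≠ 0 := Nat.cast_ne_zero.mpr hq.ne'
  have hnormq : ‖((q:ℂ))⁻¹‖ = (q:ℝ)⁻¹ := by
    rw [norm_inv]; simp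
  set r' : ℕ := if r = 0 then q else r with hr'def
  have h1 : 1 ≤ r' := by rw [hr'def]; split <;> omega
  have h2 : r' ≤ q := by rw [hr'def]; split <;> omega
  have h3 : r' % q = r := by
    rw [hr'def]; split_ifs with h
    · rw [Nat.mod_self]; omega
    · exact Nat.mod_eq_of_lt (by omega)
  have h1R : (1:ℝ) ≤ r' := by exact_mod_cast h1
  have h2R : (r':ℝ) ≤ q := by exact_mod_cast h2
  set k : ℕ := if r' ≤ N then (N - r')/q + 1 else 0 with hkdef
  rw [fiber_eq N q r r' k hq h1 h2 h3 hkdef]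
  rw [Finset.sum_image (by
    intro x _ y _ h
    exact Nat.eq_of_mul_eq_mul_right hq (by beta_reduce at h; omega))]
  have hintfull : ∀ u v : ℝ, 0 ≤ u → u ≤ v → v ≤ M → IntervalIntegrable F MeasureTheory.volume u v :=
    fun u v hu huv hv =>
      (hcont.mono (by rw [Set.uIcc_of_le huv]; exact Set.Icc_subset_Icc hu hv)).intervalIntegrable
  rcases Nat.eq_zero_or_pos k with hk0 | hkpos
  · -- empty case : r' > N, M < q
    have hrN : ¬ r' ≤ N := by
      intro h
      rw [hkdef, if_pos h] at hk0
      exact Nat.succ_ne_zero _ hk0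
    push_neg at hrN
    have hMq : M ≤ (q:ℝ) := by
      have : (N:ℝ) + 1 ≤ r' := by exact_mod_cast hrN
      linarith
    rw [hk0]
    simp only [Finset.range_zero, Finset.sum_empty, zero_sub, norm_neg]
    rw [norm_mul, hnormq]
    have hIb : ‖∫ x in (0:ℝ)..M, F x‖ ≤ B * |M - 0| :=
      intervalIntegral.norm_integral_le_of_norm_le_const (fun x hx => by
        apply hB
        rw [Set.uIoc_of_le hM.le] at hx
        exact ⟨hx.1.le, hx.2⟩)
    rw [sub_zero, abs_of_pos hM] at hIb
    have : (q:ℝ)⁻¹ * ‖∫ x in (0:ℝ)..M, F x‖ ≤ (q:ℝ)⁻¹ * (B * M) := by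
      apply mul_le_mul_of_nonneg_left hIb (by positivity)
    have h2' : (q:ℝ)⁻¹ * (B * M) ≤ B := by
      rw [inv_mul_le_iff₀ hqR]
      nlinarith
    nlinarith [mul_nonneg hK0 (by linarith : (0:ℝ) ≤ M + q)]
  · -- main case
    have hrN : r' ≤ N := by
      by_contra h
      have : k = 0 := by rw [hkdef, if_neg h]
      omega
    have hkval : k = (N - r')/q + 1 := by rw [hkdef, if_pos hrN]
    have hk1q : (k - 1) * q ≤ N - r' := by
      rw [hkval]; simpa using Nat.div_mul_le_self (N - r') q
    have hklt : N - r' < k * q := by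
      rw [hkval]
      have hmod := Nat.mod_lt (N - r') hq
      have hdm := Nat.div_add_mod (N - r') q
      calc N - r' = q * ((N - r')/q) + (N - r') % q := hdm.symm
        _ < q * ((N - r')/q) + q := Nat.add_lt_add_left hmod _
        _ = ((N - r')/q + 1) * q := by ring
    -- real versions
    have hrNR : (r':ℝ) ≤ N := by exact_mod_cast hrN
    have hkq_le : ((k:ℝ) - 1) * q ≤ (N:ℝ) - r' := by
      have := (Nat.cast_le (α := ℝ)).mpr hk1q
      push_cast [Nat.cast_sub hrN, Nat.cast_sub (by omega : 1 ≤ k)] at this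
      linarith [this]
    have hkq_gt : (N:ℝ) - r' < k * q := by
      have := (Nat.cast_lt (α := ℝ)).mpr hklt
      push_cast [Nat.cast_sub hrN] at this
      linarith
    -- define grid points
    set a : ℕ → ℝ := fun j => max 0 ((r':ℝ) + j*q - q) with hadef
    have ha0 : a 0 = 0 := by
      simp only [hadef]
      rw [max_eq_left]
      push_cast
      linarith
    have haj : ∀ j : ℕ, 1 ≤ j → a j = (r':ℝ) + j*q - q := by
      intro j hj
      have hjR : (1:ℝ) ≤ j := by exact_mod_cast hj
      simp only [hadef]
      rw [max_eq_right]
      nlinarith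
    have hanonneg : ∀ j, 0 ≤ a j := fun j => le_max_left _ _
    have hamono : ∀ i j : ℕ, i ≤ j → a i ≤ a j := by
      intro i j hij
      simp only [hadef]
      have hijR : (i:ℝ) ≤ j := by exact_mod_cast hij
      apply max_le_max le_rfl
      have : (i:ℝ)*q ≤ (j:ℝ)*q := mul_le_mul_of_nonneg_right hijR hqR.le
      linarith
    have hstep2 : ∀ j : ℕ, 0 ≤ a (j+1) - a j := fun j => by linarith [hamono j (j+1) (by omega)]
    have hstep : ∀ j : ℕ, a (j+1) - a j ≤ q := by
      intro j
      have h' : (r':ℝ) + j*q - q ≤ a j := le_max_right _ _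
      rw [haj (j+1) (by omega)]
      push_cast
      linarith
    have hak : a k = (r':ℝ) + k*q - q := haj k (by omega)
    have hakN : a k ≤ (N:ℝ) := by rw [hak]; linarith [hkq_le]
    have hNak : (N:ℝ) < a k + q := by rw [hak]; linarith [hkq_gt]
    have hajM : ∀ j, j ≤ k → a j ≤ M := fun j hj => le_trans (le_trans (hamono j k hj) hakN) hNM
    have hint : ∀ i, i < k → IntervalIntegrable F MeasureTheory.volume (a i) (a (i+1)) :=
      fun i hi => hintfull _ _ (hanonneg i) (by linarith [hstep2 i]) (hajM (i+1) hi)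
    have hsum : ∑ i ∈ Finset.range k, ∫ x in a i..a (i+1), F x = ∫ x in (a 0)..(a k), F x :=
      intervalIntegral.sum_integral_adjacent_intervals hint
    have hint2 : IntervalIntegrable F MeasureTheory.volume (a k) M :=
      hintfull _ _ (hanonneg k) (le_trans hakN hNM) le_rfl
    have hint0k : IntervalIntegrable F MeasureTheory.volume (a 0) (a k) :=
      hintfull _ _ (hanonneg 0) (hamono 0 k (by omega)) (hajM k le_rfl)
    have hsplit : ∫ x in (0:ℝ)..M, F x = (∫ x in (a 0)..(a k), F x) + ∫ x in a k..M, F x := by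
      rw [intervalIntegral.integral_add_adjacent_intervals hint0k hint2, ha0]
    have hptval : ∀ j ∈ Finset.range k, F ((r' + j * q : ℕ):ℝ) = F (a (j+1)) := by
      intro j _
      congr 1
      rw [haj (j+1) (by omega)]
      push_cast
      ring
    set E : ℂ := (∑ j ∈ Finset.range k, ((q:ℂ) * F (a (j+1)) - ∫ x in a j..a (j+1), F x))
        - ∫ x in a k..M, F x with hEdef
    have hfac : (∑ j ∈ Finset.range k, F ((r' + j * q : ℕ):ℝ))
        - (q:ℂ)⁻¹ * ∫ x in (0:ℝ)..M, F x = (q:ℂ)⁻¹ * E := by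
      rw [Finset.sum_congr rfl hptval, hsplit, ← hsum, hEdef]
      rw [Finset.sum_sub_distrib, ← Finset.mul_sum]
      rw [mul_sub, mul_sub, ← mul_assoc, inv_mul_cancel₀ hqC, one_mul]
      ring
    rw [hfac, norm_mul, hnormq]
    have hmemIcc : ∀ j, j ≤ k → a j ∈ Set.Icc (0:ℝ) M := fun j hj => ⟨hanonneg j, hajM j hj⟩
    have hterm : ∀ j ∈ Finset.range k, ‖(q:ℂ) * F (a (j+1)) - ∫ x in a j..a (j+1), F x‖
        ≤ K*q*q + ((q:ℝ) - (a (j+1) - a j))*B := by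
      intro j hj
      rw [Finset.mem_range] at hj
      have hj1k : j + 1 ≤ k := hj
      have hmem1 : a (j+1) ∈ Set.Icc (0:ℝ) M := hmemIcc (j+1) hj1k
      have hIsub : ∫ x in a j..a (j+1), F x
          = (∫ x in a j..a (j+1), (F x - F (a (j+1))))
            + ((a (j+1) - a j) : ℝ) • F (a (j+1)) := by
        rw [intervalIntegral.integral_sub (hint j hj) intervalIntegrable_const,
          intervalIntegral.integral_const]
        abel
      rw [hIsub]
      have hexp : (q:ℂ) * F (a (j+1)) - ((∫ x in a j..a (j+1), (F x - F (a (j+1))))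
            + ((a (j+1) - a j) : ℝ) • F (a (j+1)))
          = (((q:ℝ) - (a (j+1) - a j) : ℝ) : ℂ) * F (a (j+1))
            - ∫ x in a j..a (j+1), (F x - F (a (j+1))) := by
        rw [Complex.real_smul]
        push_cast
        ring
      rw [hexp]
      have hbound1 : ‖∫ x in a j..a (j+1), (F x - F (a (j+1)))‖ ≤ (K*q) * |a (j+1) - a j| := by
        apply intervalIntegral.norm_integral_le_of_norm_le_const
        intro x hx
        rw [Set.uIoc_of_le (by linarith [hstep2 j])] at hx
        have hxm : x ∈ Set.Icc (0:ℝ) M :=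
          ⟨le_trans (hanonneg j) hx.1.le, le_trans hx.2 (hajM (j+1) hj1k)⟩
        calc ‖F x - F (a (j+1))‖ ≤ K * |x - a (j+1)| := hK x hxm _ hmem1
          _ ≤ K * q := by
              apply mul_le_mul_of_nonneg_left _ hK0
              rw [abs_le]
              constructor
              · linarith [hstep j, hx.1, hx.2]
              · linarith [hx.2, hqR]
          _ = K * q := rfl
      calc ‖(((q:ℝ) - (a (j+1) - a j) : ℝ) : ℂ) * F (a (j+1))
            - ∫ x in a j..a (j+1), (F x - F (a (j+1)))‖
          ≤ ‖(((q:ℝ) - (a (j+1) - a j) : ℝ) : ℂ) * F (a (j+1))‖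
            + ‖∫ x in a j..a (j+1), (F x - F (a (j+1)))‖ := norm_sub_le _ _
        _ ≤ ((q:ℝ) - (a (j+1) - a j)) * B + (K*q) * |a (j+1) - a j| := by
            apply add_le_add _ hbound1
            rw [norm_mul, Complex.norm_real, Real.norm_eq_abs,
              abs_of_nonneg (by linarith [hstep j])]
            exact mul_le_mul_of_nonneg_left (hB _ hmem1) (by linarith [hstep j])
        _ ≤ K*q*q + ((q:ℝ) - (a (j+1) - a j))*B := by
            rw [abs_of_nonneg (hstep2 j)]
            have : (K*q) * (a (j+1) - a j) ≤ K*q*q :=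
              mul_le_mul_of_nonneg_left (hstep j) (by positivity)
            linarith
    have htail : ‖∫ x in a k..M, F x‖ ≤ B * (2*q) := by
      have h' : ‖∫ x in a k..M, F x‖ ≤ B * |M - a k| := by
        apply intervalIntegral.norm_integral_le_of_norm_le_const
        intro x hx
        rw [Set.uIoc_of_le (le_trans hakN hNM)] at hx
        exact hB x ⟨le_trans (hanonneg k) hx.1.le, hx.2⟩
      have h'' : |M - a k| ≤ 2*q := by
        rw [abs_of_nonneg (by linarith [le_trans hakN hNM])]
        linarith
      calc ‖∫ x in a k..M, F x‖ ≤ B * |M - a k| := h'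
        _ ≤ B * (2*q) := mul_le_mul_of_nonneg_left h'' hB0
    have hEbound : ‖E‖ ≤ (k:ℝ)*(K*q*q) + (q:ℝ)*B + B*(2*q) := by
      have hs : ‖∑ j ∈ Finset.range k, ((q:ℂ) * F (a (j+1)) - ∫ x in a j..a (j+1), F x)‖
          ≤ ∑ j ∈ Finset.range k, (K*q*q + ((q:ℝ) - (a (j+1) - a j))*B) :=
        norm_sum_le_of_le _ hterm
      have hsval : ∑ j ∈ Finset.range k, (K*q*q + ((q:ℝ) - (a (j+1) - a j))*B)
          = (k:ℝ)*(K*q*q) + ((k:ℝ)*q - (a k - a 0))*B := by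
        rw [Finset.sum_add_distrib, Finset.sum_const, ← Finset.sum_mul,
          Finset.sum_sub_distrib, Finset.sum_const, Finset.sum_range_sub a k]
        simp [nsmul_eq_mul]
      have hck : ((k:ℝ)*q - (a k - a 0))*B ≤ (q:ℝ)*B := by
        apply mul_le_mul_of_nonneg_right _ hB0
        rw [ha0, hak]
        linarith
      calc ‖E‖ ≤ ‖∑ j ∈ Finset.range k, ((q:ℂ) * F (a (j+1)) - ∫ x in a j..a (j+1), F x)‖
            + ‖∫ x in a k..M, F x‖ := norm_sub_le _ _
        _ ≤ ((k:ℝ)*(K*q*q) + ((k:ℝ)*q - (a k - a 0))*B) + B*(2*q) := by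
            rw [← hsval]
            exact add_le_add hs htail
        _ ≤ (k:ℝ)*(K*q*q) + (q:ℝ)*B + B*(2*q) := by linarith
    have hkqM : (k:ℝ)*q ≤ M + q := by linarith [hkq_le]
    calc (q:ℝ)⁻¹ * ‖E‖ ≤ (q:ℝ)⁻¹ * ((k:ℝ)*(K*q*q) + (q:ℝ)*B + B*(2*q)) :=
          mul_le_mul_of_nonneg_left hEbound (by positivity)
      _ = (k:ℝ)*q*K + 3*B := by field_simp; ring
      _ ≤ (M+q)*K + 3*B := by nlinarith
      _ = K*(M+q) + 3*B := by ring


lemma fiber_card (N q r : ℕ) (M : ℝ) (hq : 0 < q) (hr : r < q) (hNM : (N:ℝ) ≤ M) :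
    (((Finset.Icc 1 N).filter (fun m => m % q = r)).card : ℝ) * q ≤ M + q := by
  have hM0 : (0:ℝ) ≤ M := le_trans (Nat.cast_nonneg N) hNM
  have hqR : (0:ℝ) < q := by exact_mod_cast hq
  set r' : ℕ := if r = 0 then q else r with hr'def
  have h1 : 1 ≤ r' := by rw [hr'def]; split <;> omega
  have h2 : r' ≤ q := by rw [hr'def]; split <;> omega
  have h3 : r' % q = r := by
    rw [hr'def]; split_ifs with h
    · rw [Nat.mod_self]; omega
    · exact Nat.mod_eq_of_lt (by omega)
  set k : ℕ := if r' ≤ N then (N - r')/q + 1 else 0 with hkdef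
  rw [fiber_eq N q r r' k hq h1 h2 h3 hkdef]
  rw [Finset.card_image_of_injective _ (fun x y h => Nat.eq_of_mul_eq_mul_right hq (by omega)),
    Finset.card_range]
  rcases le_or_gt r' N with h | h
  · have hkval : k = (N - r')/q + 1 := by rw [hkdef, if_pos h]
    have hkq : k * q ≤ N + q := by
      rw [hkval, add_mul, one_mul]
      have : (N - r')/q * q ≤ N - r' := Nat.div_mul_le_self _ _
      omega
    have : ((k * q : ℕ) : ℝ) ≤ (N:ℝ) + q := by exact_mod_cast hkq
    push_cast at this
    linarith
  · have : k = 0 := by rw [hkdef, if_neg (by omega)]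
    rw [this]
    push_cast
    linarith


lemma norm_exp_real (x : ℝ) : ‖Complex.exp (2*Real.pi*Complex.I*(x:ℂ))‖ = 1 := by
  rw [show 2*Real.pi*Complex.I*(x:ℂ) = ((2*Real.pi*x : ℝ):ℂ)*Complex.I by push_cast; ring]
  exact Complex.norm_exp_ofReal_mul_I _

lemma phase_eq (q : ℕ) (hq : 0 < q) (aN : ℕ) (h₁ h₂ : ℤ) (hd : (q:ℤ) ∣ h₁ - h₂) :
    Complex.exp (2*Real.pi*Complex.I*((h₁:ℂ) * aN / q))
      = Complex.exp (2*Real.pi*Complex.I*((h₂:ℂ) * aN / q)) := by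
  obtain ⟨t, ht⟩ := hd
  have hqC : (q:ℂ) ≠ 0 := Nat.cast_ne_zero.mpr hq.ne'
  have hcast : (h₁:ℂ) = (h₂:ℂ) + (q:ℂ) * (t:ℂ) := by
    have : h₁ = h₂ + (q:ℤ) * t := by linarith
    exact_mod_cast congrArg (Int.cast : ℤ → ℂ) this
  have harg : 2*Real.pi*Complex.I*((h₁:ℂ) * aN / q)
      = 2*Real.pi*Complex.I*((h₂:ℂ) * aN / q) + ((t*aN : ℤ):ℂ) * (2*Real.pi*Complex.I) := by
    rw [hcast]
    field_simp
    push_cast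
    ring
  rw [harg, Complex.exp_add, Complex.exp_int_mul_two_pi_mul_I, mul_one]

lemma hq_dvd (b₁ b₂ b₃ : ℤ) (q m n : ℕ) :
    (q:ℤ) ∣ (b₁*(m:ℤ)^2 + b₂*(m:ℤ)*(n:ℤ) + b₃*(n:ℤ)^2)
      - (b₁*((m % q : ℕ):ℤ)^2 + b₂*((m % q : ℕ):ℤ)*((n % q : ℕ):ℤ) + b₃*((n % q : ℕ):ℤ)^2) := by
  have hm : ((m % q : ℕ):ℤ) ≡ (m:ℤ) [ZMOD q] := by
    have : ((m % q : ℕ):ℤ) = (m:ℤ) % (q:ℤ) := by push_cast; ring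
    rw [this]
    exact Int.emod_emod_of_dvd _ dvd_rfl
  have hn : ((n % q : ℕ):ℤ) ≡ (n:ℤ) [ZMOD q] := by
    have : ((n % q : ℕ):ℤ) = (n:ℤ) % (q:ℤ) := by push_cast; ring
    rw [this]
    exact Int.emod_emod_of_dvd _ dvd_rfl
  have h : (b₁*((m % q : ℕ):ℤ)^2 + b₂*((m % q : ℕ):ℤ)*((n % q : ℕ):ℤ) + b₃*((n % q : ℕ):ℤ)^2)
      ≡ (b₁*(m:ℤ)^2 + b₂*(m:ℤ)*(n:ℤ) + b₃*(n:ℤ)^2) [ZMOD q] :=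
    by
      have := (((hm.pow 2).mul_left b₁).add (((hm.mul hn)).mul_left b₂)).add ((hn.pow 2).mul_left b₃)
      convert this using 2 <;> ring
  exact h.dvd

lemma norm_exp_int_mul (h : ℤ) (x : ℝ) :
    ‖Complex.exp (2*Real.pi*Complex.I*((h:ℂ)*(x:ℂ)))‖ = 1 := by
  rw [show ((h:ℂ)*(x:ℂ)) = (((h:ℝ)*x : ℝ):ℂ) by push_cast; ring]
  exact norm_exp_real _

lemma norm_exp_gauss (h : ℤ) (a q : ℕ) :
    ‖Complex.exp (2*Real.pi*Complex.I*((h:ℂ)*a/q))‖ = 1 := by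
  rw [show ((h:ℂ)*a/q) = (((h:ℝ)*a/q : ℝ):ℂ) by push_cast; ring]
  exact norm_exp_real _


lemma two_dim (g : ℝ → ℝ → ℂ) (L M : ℝ) (N q r s : ℕ) (hq : 0 < q) (hr : r < q) (hs : s < q)
    (hM : 0 < M) (hNM : (N:ℝ) ≤ M) (hMN : M < N + 1) (hL0 : 0 ≤ L)
    (hg1 : ∀ x ∈ Set.Icc (0:ℝ) M, ∀ y ∈ Set.Icc (0:ℝ) M, ‖g x y‖ ≤ 1)
    (hLip : ∀ x ∈ Set.Icc (0:ℝ) M, ∀ x' ∈ Set.Icc (0:ℝ) M, ∀ y ∈ Set.Icc (0:ℝ) M,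
      ∀ y' ∈ Set.Icc (0:ℝ) M, ‖g x y - g x' y'‖ ≤ L * (|x - x'| + |y - y'|)) :
    ‖(∑ m ∈ (Finset.Icc 1 N).filter (fun m => m % q = r),
        ∑ n ∈ (Finset.Icc 1 N).filter (fun n => n % q = s), g m n) -
      (q:ℂ)⁻¹ * ((q:ℂ)⁻¹ * ∫ x in (0:ℝ)..M, ∫ y in (0:ℝ)..M, g x y)‖
      ≤ ((M+q)/q) * (L*(M+q) + 3) + ((L*M/q)*(M+q) + 3*(M/q)) := by
  have hqR : (0:ℝ) < q := by exact_mod_cast hq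
  have hnormq : ‖((q:ℂ))⁻¹‖ = (q:ℝ)⁻¹ := by rw [norm_inv]; simp
  -- membership of sum points
  have hmemM : ∀ m ∈ (Finset.Icc 1 N).filter (fun m => m % q = r), ((m:ℝ)) ∈ Set.Icc (0:ℝ) M := by
    intro m hm
    rw [Finset.mem_filter, Finset.mem_Icc] at hm
    constructor
    · positivity
    · calc (m:ℝ) ≤ N := by exact_mod_cast hm.1.2
        _ ≤ M := hNM
  -- F = averaged inner integral
  set F : ℝ → ℂ := fun x => (q:ℂ)⁻¹ * ∫ y in (0:ℝ)..M, g x y with hFdef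
  -- inner integrability
  have hgcont : ∀ x ∈ Set.Icc (0:ℝ) M, IntervalIntegrable (fun y => g x y) MeasureTheory.volume 0 M := by
    intro x hx
    apply ContinuousOn.intervalIntegrable
    rw [Set.uIcc_of_le hM.le]
    apply lip_continuousOn (fun y => g x y) L M
    intro y hy y' hy'
    have := hLip x hx x hx y hy y' hy'
    simpa using this
  -- inner estimate
  have hinner : ∀ m ∈ (Finset.Icc 1 N).filter (fun m => m % q = r),
      ‖(∑ n ∈ (Finset.Icc 1 N).filter (fun n => n % q = s), g m n) - F m‖ ≤ L*(M+q) + 3*1 := by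
    intro m hm
    exact one_dim (fun y => g m y) L 1 M N q s hq hs hM hNM hMN zero_le_one hL0
      (fun y hy => hg1 _ (hmemM m hm) y hy)
      (fun y hy y' hy' => by simpa using hLip _ (hmemM m hm) _ (hmemM m hm) y hy y' hy')
  -- properties of F
  have hFB : ∀ x ∈ Set.Icc (0:ℝ) M, ‖F x‖ ≤ M/q := by
    intro x hx
    rw [hFdef]
    simp only []
    rw [norm_mul, hnormq]
    have : ‖∫ y in (0:ℝ)..M, g x y‖ ≤ 1 * |M - 0| :=
      intervalIntegral.norm_integral_le_of_norm_le_const (fun y hy => by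
        rw [Set.uIoc_of_le hM.le] at hy
        exact hg1 x hx y ⟨hy.1.le, hy.2⟩)
    rw [sub_zero, abs_of_pos hM, one_mul] at this
    calc (q:ℝ)⁻¹ * ‖∫ y in (0:ℝ)..M, g x y‖ ≤ (q:ℝ)⁻¹ * M :=
          mul_le_mul_of_nonneg_left this (by positivity)
      _ = M/q := by rw [div_eq_mul_inv]; ring
  have hFK : ∀ x ∈ Set.Icc (0:ℝ) M, ∀ x' ∈ Set.Icc (0:ℝ) M, ‖F x - F x'‖ ≤ (L*M/q) * |x - x'| := by
    intro x hx x' hx'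
    rw [hFdef]
    simp only []
    rw [← mul_sub, norm_mul, hnormq,
      ← intervalIntegral.integral_sub (hgcont x hx) (hgcont x' hx')]
    have hub : ‖∫ y in (0:ℝ)..M, (g x y - g x' y)‖ ≤ (L * |x - x'|) * |M - 0| :=
      intervalIntegral.norm_integral_le_of_norm_le_const (fun y hy => by
        rw [Set.uIoc_of_le hM.le] at hy
        have := hLip x hx x' hx' y ⟨hy.1.le, hy.2⟩ y ⟨hy.1.le, hy.2⟩
        simpa using this)
    rw [sub_zero, abs_of_pos hM] at hub
    calc (q:ℝ)⁻¹ * ‖∫ y in (0:ℝ)..M, (g x y - g x' y)‖ ≤ (q:ℝ)⁻¹ * (L * |x - x'| * M) :=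
          mul_le_mul_of_nonneg_left hub (by positivity)
      _ = (L*M/q) * |x - x'| := by field_simp
  -- outer estimate
  have houter : ‖(∑ m ∈ (Finset.Icc 1 N).filter (fun m => m % q = r), F m) -
      (q:ℂ)⁻¹ * ∫ x in (0:ℝ)..M, F x‖ ≤ (L*M/q)*(M+q) + 3*(M/q) :=
    one_dim F (L*M/q) (M/q) M N q r hq hr hM hNM hMN (by positivity) (by positivity) hFB hFK
  -- rewrite ∫ F
  have hintF : ∫ x in (0:ℝ)..M, F x = (q:ℂ)⁻¹ * ∫ x in (0:ℝ)..M, ∫ y in (0:ℝ)..M, g x y := by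
    rw [hFdef]
    exact intervalIntegral.integral_const_mul _ _
  rw [hintF] at houter
  -- combine
  have hsplit : (∑ m ∈ (Finset.Icc 1 N).filter (fun m => m % q = r),
        ∑ n ∈ (Finset.Icc 1 N).filter (fun n => n % q = s), g m n) -
      (q:ℂ)⁻¹ * ((q:ℂ)⁻¹ * ∫ x in (0:ℝ)..M, ∫ y in (0:ℝ)..M, g x y)
      = (∑ m ∈ (Finset.Icc 1 N).filter (fun m => m % q = r),
          ((∑ n ∈ (Finset.Icc 1 N).filter (fun n => n % q = s), g m n) - F m))
        + ((∑ m ∈ (Finset.Icc 1 N).filter (fun m => m % q = r), F m) -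
          (q:ℂ)⁻¹ * ((q:ℂ)⁻¹ * ∫ x in (0:ℝ)..M, ∫ y in (0:ℝ)..M, g x y)) := by
    rw [Finset.sum_sub_distrib]
    ring
  rw [hsplit]
  have hcard : (((Finset.Icc 1 N).filter (fun m => m % q = r)).card : ℝ) ≤ (M+q)/q := by
    rw [le_div_iff₀ hqR]
    exact fiber_card N q r M hq hr hNM
  calc ‖_ + _‖ ≤ ‖(∑ m ∈ (Finset.Icc 1 N).filter (fun m => m % q = r),
          ((∑ n ∈ (Finset.Icc 1 N).filter (fun n => n % q = s), g m n) - F m))‖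
        + ‖(∑ m ∈ (Finset.Icc 1 N).filter (fun m => m % q = r), F m) -
          (q:ℂ)⁻¹ * ((q:ℂ)⁻¹ * ∫ x in (0:ℝ)..M, ∫ y in (0:ℝ)..M, g x y)‖ := norm_add_le _ _
    _ ≤ (((Finset.Icc 1 N).filter (fun m => m % q = r)).card : ℝ) * (L*(M+q) + 3*1)
        + ((L*M/q)*(M+q) + 3*(M/q)) := by
        apply add_le_add _ houter
        calc ‖∑ m ∈ (Finset.Icc 1 N).filter (fun m => m % q = r),
              ((∑ n ∈ (Finset.Icc 1 N).filter (fun n => n % q = s), g m n) - F m)‖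
            ≤ ∑ m ∈ (Finset.Icc 1 N).filter (fun m => m % q = r), (L*(M+q) + 3*1) :=
              norm_sum_le_of_le _ hinner
          _ = (((Finset.Icc 1 N).filter (fun m => m % q = r)).card : ℝ) * (L*(M+q) + 3*1) := by
              rw [Finset.sum_const, nsmul_eq_mul]
    _ ≤ ((M+q)/q) * (L*(M+q) + 3) + ((L*M/q)*(M+q) + 3*(M/q)) := by
        have h31 : L*(M+q) + 3*1 = L*(M+q) + 3 := by ring
        rw [h31]
        apply add_le_add_left
        apply mul_le_mul_of_nonneg_right hcard
        have : (0:ℝ) ≤ M + q := by linarith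
        positivity


theorem major_arc_asymptotic (b₁ b₂ b₃ : ℤ) :
    ∃ C : ℝ, 0 < C ∧ ∀ a q : ℕ, 0 < a → 0 < q → ∀ β M : ℝ, 0 < M →
      ‖((∑ m ∈ Finset.Icc 1 ⌊M⌋₊, ∑ n ∈ Finset.Icc 1 ⌊M⌋₊,
            Complex.exp (2 * Real.pi * Complex.I *
              (((b₁ * m ^ 2 + b₂ * m * n + b₃ * n ^ 2 : ℤ) : ℂ) *
                (((a : ℝ) / q + β : ℝ) : ℂ)))) -
          ((q : ℂ) ^ 2)⁻¹ *
            (∑ r ∈ Finset.range q, ∑ s ∈ Finset.range q,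
              Complex.exp (2 * Real.pi * Complex.I *
                (((b₁ * r ^ 2 + b₂ * r * s + b₃ * s ^ 2 : ℤ) : ℂ) * a / q))) *
            ∫ x in (0:ℝ)..M, ∫ y in (0:ℝ)..M,
              Complex.exp (2 * Real.pi * Complex.I *
                ((((b₁ : ℝ) * x ^ 2 + (b₂ : ℝ) * x * y + (b₃ : ℝ) * y ^ 2) * β : ℝ) : ℂ)))‖
        ≤ C * q * M * (1 + (|(b₁ : ℝ)| + |(b₂ : ℝ)| + |(b₃ : ℝ)|) * M ^ 2 * |β|) := by
  refine ⟨160, by norm_num, ?_⟩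
  intro a q ha hq β M hM
  rcases le_or_gt (q:ℝ) M with hqM | hqM
  · set N := ⌊M⌋₊ with hNdef
    have hNM : (N:ℝ) ≤ M := Nat.floor_le hM.le
    have hMN : M < N + 1 := Nat.lt_floor_add_one M
    have hqR : (0:ℝ) < q := by exact_mod_cast hq
    have hq1 : (1:ℝ) ≤ q := by exact_mod_cast hq
    have hqC : (q:ℂ) ≠ 0 := Nat.cast_ne_zero.mpr hq.ne'
    set J : ℝ := |(b₁:ℝ)| + |(b₂:ℝ)| + |(b₃:ℝ)| with hJdef
    have hJ0 : 0 ≤ J := by positivity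
    set L : ℝ := 8*Real.pi*(J*M * |β|) with hLdef
    have hL0 : 0 ≤ L := by positivity
    set g : ℝ → ℝ → ℂ := fun x y => Complex.exp (2 * Real.pi * Complex.I *
        ((((b₁ : ℝ) * x ^ 2 + (b₂ : ℝ) * x * y + (b₃ : ℝ) * y ^ 2) * β : ℝ) : ℂ)) with hgdef
    -- bounds on g
    have hg1 : ∀ x ∈ Set.Icc (0:ℝ) M, ∀ y ∈ Set.Icc (0:ℝ) M, ‖g x y‖ ≤ 1 :=
      fun x _ y _ => le_of_eq (norm_exp_real _)
    have hLip : ∀ x ∈ Set.Icc (0:ℝ) M, ∀ x' ∈ Set.Icc (0:ℝ) M, ∀ y ∈ Set.Icc (0:ℝ) M,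
        ∀ y' ∈ Set.Icc (0:ℝ) M, ‖g x y - g x' y'‖ ≤ L * (|x - x'| + |y - y'|) := by
      intro x hx x' hx' y hy y' hy'
      have h1 : ‖g x y - g x' y'‖ ≤ 4*Real.pi * |((b₁ : ℝ) * x ^ 2 + (b₂ : ℝ) * x * y + (b₃ : ℝ) * y ^ 2) * β
          - ((b₁ : ℝ) * x' ^ 2 + (b₂ : ℝ) * x' * y' + (b₃ : ℝ) * y' ^ 2) * β| := lip_e' _ _
      have hxx : |x + x'| ≤ 2*M := by
        rw [abs_le]; exact ⟨by linarith [hx.1, hx'.1], by linarith [hx.2, hx'.2]⟩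
      have hyy : |y + y'| ≤ 2*M := by
        rw [abs_le]; exact ⟨by linarith [hy.1, hy'.1], by linarith [hy.2, hy'.2]⟩
      have hxM : |x| ≤ M := abs_le.mpr ⟨by linarith [hx.1], hx.2⟩
      have hy'M : |y'| ≤ M := abs_le.mpr ⟨by linarith [hy'.1], hy'.2⟩
      have hP : |((b₁ : ℝ) * x ^ 2 + (b₂ : ℝ) * x * y + (b₃ : ℝ) * y ^ 2)
          - ((b₁ : ℝ) * x' ^ 2 + (b₂ : ℝ) * x' * y' + (b₃ : ℝ) * y' ^ 2)|
          ≤ 2*M*J*(|x - x'| + |y - y'|) := by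
        have e1 : ((b₁ : ℝ) * x ^ 2 + (b₂ : ℝ) * x * y + (b₃ : ℝ) * y ^ 2)
            - ((b₁ : ℝ) * x' ^ 2 + (b₂ : ℝ) * x' * y' + (b₃ : ℝ) * y' ^ 2)
            = (b₁:ℝ)*((x+x')*(x-x')) + ((b₂:ℝ)*(x*(y-y') + y'*(x-x'))
              + (b₃:ℝ)*((y+y')*(y-y'))) := by ring
        rw [e1]
        have t1 : |(b₁:ℝ)*((x+x')*(x-x'))| ≤ |(b₁:ℝ)| *((2*M) * |x - x'|) := by
          rw [abs_mul, abs_mul]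
          gcongr
        have t3 : |(b₃:ℝ)*((y+y')*(y-y'))| ≤ |(b₃:ℝ)| *((2*M) * |y - y'|) := by
          rw [abs_mul, abs_mul]
          gcongr
        have t2 : |(b₂:ℝ)*(x*(y-y') + y'*(x-x'))| ≤ |(b₂:ℝ)| *(M * |y - y'| + M * |x - x'|) := by
          rw [abs_mul]
          apply mul_le_mul_of_nonneg_left _ (abs_nonneg _)
          calc |x*(y-y') + y'*(x-x')| ≤ |x*(y-y')| + |y'*(x-x')| := abs_add_le _ _
            _ = |x| * |y - y'| + |y'| * |x - x'| := by rw [abs_mul, abs_mul]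
            _ ≤ M * |y - y'| + M * |x - x'| := by
                apply add_le_add <;>
                  exact mul_le_mul_of_nonneg_right (by assumption) (abs_nonneg _)
        calc |(b₁:ℝ)*((x+x')*(x-x')) + ((b₂:ℝ)*(x*(y-y') + y'*(x-x'))
              + (b₃:ℝ)*((y+y')*(y-y')))|
            ≤ |(b₁:ℝ)*((x+x')*(x-x'))| + (|(b₂:ℝ)*(x*(y-y') + y'*(x-x'))|
              + |(b₃:ℝ)*((y+y')*(y-y'))|) :=
              le_trans (abs_add_le _ _) (by gcongr; exact abs_add_le _ _)
          _ ≤ |(b₁:ℝ)| *((2*M) * |x - x'|) + (|(b₂:ℝ)| *(M * |y - y'| + M * |x - x'|)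
              + |(b₃:ℝ)| *((2*M) * |y - y'|)) := by
              exact add_le_add t1 (add_le_add t2 t3)
          _ ≤ 2*M*J*(|x - x'| + |y - y'|) := by
              rw [hJdef]
              nlinarith [abs_nonneg (b₁:ℝ), abs_nonneg (b₂:ℝ), abs_nonneg (b₃:ℝ),
                abs_nonneg (x-x'), abs_nonneg (y-y'), hM.le,
                mul_nonneg (abs_nonneg (b₁:ℝ)) (abs_nonneg (y-y')),
                mul_nonneg (abs_nonneg (b₂:ℝ)) (abs_nonneg (x-x')),
                mul_nonneg (abs_nonneg (b₂:ℝ)) (abs_nonneg (y-y')),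
                mul_nonneg (abs_nonneg (b₃:ℝ)) (abs_nonneg (x-x')),
                mul_nonneg (mul_nonneg hM.le (abs_nonneg (b₁:ℝ))) (abs_nonneg (y-y')),
                mul_nonneg (mul_nonneg hM.le (abs_nonneg (b₂:ℝ))) (abs_nonneg (x-x')),
                mul_nonneg (mul_nonneg hM.le (abs_nonneg (b₂:ℝ))) (abs_nonneg (y-y')),
                mul_nonneg (mul_nonneg hM.le (abs_nonneg (b₃:ℝ))) (abs_nonneg (x-x'))]
      calc ‖g x y - g x' y'‖ ≤ 4*Real.pi * |((b₁ : ℝ) * x ^ 2 + (b₂ : ℝ) * x * y + (b₃ : ℝ) * y ^ 2) * β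
            - ((b₁ : ℝ) * x' ^ 2 + (b₂ : ℝ) * x' * y' + (b₃ : ℝ) * y' ^ 2) * β| := h1
        _ = 4*Real.pi*(|((b₁ : ℝ) * x ^ 2 + (b₂ : ℝ) * x * y + (b₃ : ℝ) * y ^ 2)
            - ((b₁ : ℝ) * x' ^ 2 + (b₂ : ℝ) * x' * y' + (b₃ : ℝ) * y' ^ 2)| * |β|) := by
            rw [show ((b₁ : ℝ) * x ^ 2 + (b₂ : ℝ) * x * y + (b₃ : ℝ) * y ^ 2) * β
                - ((b₁ : ℝ) * x' ^ 2 + (b₂ : ℝ) * x' * y' + (b₃ : ℝ) * y' ^ 2) * β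
                = (((b₁ : ℝ) * x ^ 2 + (b₂ : ℝ) * x * y + (b₃ : ℝ) * y ^ 2)
                - ((b₁ : ℝ) * x' ^ 2 + (b₂ : ℝ) * x' * y' + (b₃ : ℝ) * y' ^ 2)) * β from by ring,
              abs_mul]
        _ ≤ 4*Real.pi*((2*M*J*(|x - x'| + |y - y'|)) * |β|) := by
            apply mul_le_mul_of_nonneg_left _ (by positivity)
            exact mul_le_mul_of_nonneg_right hP (abs_nonneg _)
        _ = L * (|x - x'| + |y - y'|) := by rw [hLdef]; ring
    -- summand factorization
    have hsummand : ∀ m n : ℕ,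
        Complex.exp (2 * Real.pi * Complex.I *
          (((b₁ * m ^ 2 + b₂ * m * n + b₃ * n ^ 2 : ℤ) : ℂ) * (((a : ℝ) / q + β : ℝ) : ℂ)))
        = Complex.exp (2 * Real.pi * Complex.I *
            (((b₁ * ((m % q : ℕ):ℤ) ^ 2 + b₂ * (m % q : ℕ) * (n % q : ℕ)
              + b₃ * ((n % q : ℕ):ℤ) ^ 2 : ℤ) : ℂ) * a / q)) * g m n := by
      intro m n
      have hsplitarg : 2 * Real.pi * Complex.I *
          (((b₁ * m ^ 2 + b₂ * m * n + b₃ * n ^ 2 : ℤ) : ℂ) * (((a : ℝ) / q + β : ℝ) : ℂ))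
          = 2 * Real.pi * Complex.I *
              (((b₁ * m ^ 2 + b₂ * m * n + b₃ * n ^ 2 : ℤ) : ℂ) * a / q)
            + 2 * Real.pi * Complex.I *
              ((((b₁ : ℝ) * (m:ℝ) ^ 2 + (b₂ : ℝ) * (m:ℝ) * (n:ℝ) + (b₃ : ℝ) * (n:ℝ) ^ 2) * β : ℝ) : ℂ) := by
        push_cast
        field_simp
      rw [hsplitarg, Complex.exp_add, hgdef]
      congr 1
      exact phase_eq q hq a _ _ (hq_dvd b₁ b₂ b₃ q m n)
    -- reorganize the double sum
    have hSeq : (∑ m ∈ Finset.Icc 1 N, ∑ n ∈ Finset.Icc 1 N,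
          Complex.exp (2 * Real.pi * Complex.I *
            (((b₁ * m ^ 2 + b₂ * m * n + b₃ * n ^ 2 : ℤ) : ℂ) * (((a : ℝ) / q + β : ℝ) : ℂ))))
        = ∑ r ∈ Finset.range q, ∑ s ∈ Finset.range q,
            Complex.exp (2 * Real.pi * Complex.I *
              (((b₁ * r ^ 2 + b₂ * r * s + b₃ * s ^ 2 : ℤ) : ℂ) * a / q))
            * (∑ m ∈ (Finset.Icc 1 N).filter (fun m => m % q = r),
                ∑ n ∈ (Finset.Icc 1 N).filter (fun n => n % q = s), g m n) := by
      calc (∑ m ∈ Finset.Icc 1 N, ∑ n ∈ Finset.Icc 1 N,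
            Complex.exp (2 * Real.pi * Complex.I *
              (((b₁ * m ^ 2 + b₂ * m * n + b₃ * n ^ 2 : ℤ) : ℂ) * (((a : ℝ) / q + β : ℝ) : ℂ))))
          = ∑ m ∈ Finset.Icc 1 N, ∑ n ∈ Finset.Icc 1 N,
              Complex.exp (2 * Real.pi * Complex.I *
                (((b₁ * ((m % q : ℕ):ℤ) ^ 2 + b₂ * (m % q : ℕ) * (n % q : ℕ)
                  + b₃ * ((n % q : ℕ):ℤ) ^ 2 : ℤ) : ℂ) * a / q)) * g m n :=
            Finset.sum_congr rfl (fun m _ => Finset.sum_congr rfl (fun n _ => hsummand m n))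
        _ = ∑ m ∈ Finset.Icc 1 N, ∑ s ∈ Finset.range q,
              ∑ n ∈ (Finset.Icc 1 N).filter (fun n => n % q = s),
              Complex.exp (2 * Real.pi * Complex.I *
                (((b₁ * ((m % q : ℕ):ℤ) ^ 2 + b₂ * (m % q : ℕ) * (n % q : ℕ)
                  + b₃ * ((n % q : ℕ):ℤ) ^ 2 : ℤ) : ℂ) * a / q)) * g m n :=
            Finset.sum_congr rfl (fun m _ =>
              (Finset.sum_fiberwise_of_maps_to
                (fun n _ => Finset.mem_range.mpr (Nat.mod_lt n hq)) _).symm)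
        _ = ∑ r ∈ Finset.range q,
              ∑ m ∈ (Finset.Icc 1 N).filter (fun m => m % q = r),
              ∑ s ∈ Finset.range q,
              ∑ n ∈ (Finset.Icc 1 N).filter (fun n => n % q = s),
              Complex.exp (2 * Real.pi * Complex.I *
                (((b₁ * ((m % q : ℕ):ℤ) ^ 2 + b₂ * (m % q : ℕ) * (n % q : ℕ)
                  + b₃ * ((n % q : ℕ):ℤ) ^ 2 : ℤ) : ℂ) * a / q)) * g m n :=
            (Finset.sum_fiberwise_of_maps_to
              (fun m _ => Finset.mem_range.mpr (Nat.mod_lt m hq)) _).symm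
        _ = ∑ r ∈ Finset.range q, ∑ s ∈ Finset.range q,
              Complex.exp (2 * Real.pi * Complex.I *
                (((b₁ * r ^ 2 + b₂ * r * s + b₃ * s ^ 2 : ℤ) : ℂ) * a / q))
              * (∑ m ∈ (Finset.Icc 1 N).filter (fun m => m % q = r),
                  ∑ n ∈ (Finset.Icc 1 N).filter (fun n => n % q = s), g m n) := by
            apply Finset.sum_congr rfl
            intro r _
            rw [Finset.sum_comm]
            apply Finset.sum_congr rfl
            intro s _
            rw [Finset.mul_sum]
            apply Finset.sum_congr rfl
            intro m hm
            rw [Finset.mul_sum]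
            apply Finset.sum_congr rfl
            intro n hn
            have hmr : m % q = r := (Finset.mem_filter.mp hm).2
            have hns : n % q = s := (Finset.mem_filter.mp hn).2
            rw [hmr, hns]
    -- reorganize the main term
    have hGeq : ((q : ℂ) ^ 2)⁻¹ *
          (∑ r ∈ Finset.range q, ∑ s ∈ Finset.range q,
            Complex.exp (2 * Real.pi * Complex.I *
              (((b₁ * r ^ 2 + b₂ * r * s + b₃ * s ^ 2 : ℤ) : ℂ) * a / q))) *
          (∫ x in (0:ℝ)..M, ∫ y in (0:ℝ)..M, g x y)
        = ∑ r ∈ Finset.range q, ∑ s ∈ Finset.range q,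
            Complex.exp (2 * Real.pi * Complex.I *
              (((b₁ * r ^ 2 + b₂ * r * s + b₃ * s ^ 2 : ℤ) : ℂ) * a / q))
            * ((q:ℂ)⁻¹ * ((q:ℂ)⁻¹ * ∫ x in (0:ℝ)..M, ∫ y in (0:ℝ)..M, g x y)) := by
      rw [Finset.mul_sum, Finset.sum_mul]
      apply Finset.sum_congr rfl
      intro r _
      rw [Finset.mul_sum, Finset.sum_mul]
      apply Finset.sum_congr rfl
      intro s _
      rw [sq, mul_inv]
      ring
    rw [hSeq, hGeq, ← Finset.sum_sub_distrib]
    have hDpos : (0:ℝ) ≤ M + q := by linarith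
    set D : ℝ := ((M+q)/q) * (L*(M+q) + 3) + ((L*M/q)*(M+q) + 3*(M/q)) with hDdef
    have hper : ∀ r ∈ Finset.range q, ∀ s ∈ Finset.range q,
        ‖Complex.exp (2 * Real.pi * Complex.I *
            (((b₁ * r ^ 2 + b₂ * r * s + b₃ * s ^ 2 : ℤ) : ℂ) * a / q))
          * (∑ m ∈ (Finset.Icc 1 N).filter (fun m => m % q = r),
              ∑ n ∈ (Finset.Icc 1 N).filter (fun n => n % q = s), g m n)
          - Complex.exp (2 * Real.pi * Complex.I *
              (((b₁ * r ^ 2 + b₂ * r * s + b₃ * s ^ 2 : ℤ) : ℂ) * a / q))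
            * ((q:ℂ)⁻¹ * ((q:ℂ)⁻¹ * ∫ x in (0:ℝ)..M, ∫ y in (0:ℝ)..M, g x y))‖ ≤ D := by
      intro r hr s hs
      rw [← mul_sub, norm_mul, norm_exp_gauss, one_mul]
      exact two_dim g L M N q r s hq (Finset.mem_range.mp hr) (Finset.mem_range.mp hs)
        hM hNM hMN hL0 hg1 hLip
    calc ‖∑ r ∈ Finset.range q, (∑ s ∈ Finset.range q,
          Complex.exp (2 * Real.pi * Complex.I *
            (((b₁ * r ^ 2 + b₂ * r * s + b₃ * s ^ 2 : ℤ) : ℂ) * a / q))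
          * (∑ m ∈ (Finset.Icc 1 N).filter (fun m => m % q = r),
              ∑ n ∈ (Finset.Icc 1 N).filter (fun n => n % q = s), g m n)
          - ∑ s ∈ Finset.range q,
            Complex.exp (2 * Real.pi * Complex.I *
              (((b₁ * r ^ 2 + b₂ * r * s + b₃ * s ^ 2 : ℤ) : ℂ) * a / q))
            * ((q:ℂ)⁻¹ * ((q:ℂ)⁻¹ * ∫ x in (0:ℝ)..M, ∫ y in (0:ℝ)..M, g x y)))‖
        ≤ ∑ r ∈ Finset.range q, ((q:ℝ) * D) := by
          apply norm_sum_le_of_le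
          intro r hr
          rw [← Finset.sum_sub_distrib]
          calc ‖_‖ ≤ ∑ s ∈ Finset.range q, D :=
                norm_sum_le_of_le _ (fun s hs => hper r hr s hs)
            _ = (q:ℝ) * D := by
                rw [Finset.sum_const, Finset.card_range, nsmul_eq_mul]
      _ = (q:ℝ) * ((q:ℝ) * D) := by
          rw [Finset.sum_const, Finset.card_range, nsmul_eq_mul]
      _ ≤ 160 * q * M * (1 + J * M ^ 2 * |β|) := by
          have hqD : (q:ℝ) * D = (M+q)*(L*(M+q)+3) + (L*M*(M+q) + 3*M) := by
            rw [hDdef]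
            field_simp
          rw [hqD]
          have h2M : M + q ≤ 2*M := by linarith
          have hs1 : (M+q)*(L*(M+q)+3) ≤ (2*M)*(L*(2*M)+3) := by
            apply mul_le_mul h2M _ _ (by linarith)
            · exact add_le_add_left (mul_le_mul_of_nonneg_left h2M hL0) 3
            · positivity
          have hs2 : L*M*(M+q) ≤ L*M*(2*M) := mul_le_mul_of_nonneg_left h2M (by positivity)
          have hpi : 48*Real.pi ≤ 160 := by nlinarith [Real.pi_lt_d2]
          have hJb : (0:ℝ) ≤ J * M^2 * |β| * M := by positivity
          have hLM : 6*(L*M^2) ≤ 160*(J * M^2 * |β|)*M := by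
            rw [hLdef]
            calc 6*(8*Real.pi*(J*M*|β|)*M^2) = (48*Real.pi) * (J * M^2 * |β| * M) := by ring
              _ ≤ 160 * (J * M^2 * |β| * M) := mul_le_mul_of_nonneg_right hpi hJb
              _ = 160*(J * M^2 * |β|)*M := by ring
          have hEb : (2*M)*(L*(2*M)+3) + (L*M*(2*M) + 3*M) = 6*(L*M^2) + 9*M := by ring
          have hEfin : (M+q)*(L*(M+q)+3) + (L*M*(M+q) + 3*M) ≤ 160 * M * (1 + J * M ^ 2 * |β|) := by
            calc (M+q)*(L*(M+q)+3) + (L*M*(M+q) + 3*M)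
                ≤ (2*M)*(L*(2*M)+3) + (L*M*(2*M) + 3*M) := by linarith
              _ = 6*(L*M^2) + 9*M := hEb
              _ ≤ 160*(J * M^2 * |β|)*M + 160*M := by linarith
              _ = 160 * M * (1 + J * M ^ 2 * |β|) := by ring
          calc (q:ℝ) * ((M+q)*(L*(M+q)+3) + (L*M*(M+q) + 3*M))
              ≤ (q:ℝ) * (160 * M * (1 + J * M ^ 2 * |β|)) :=
                mul_le_mul_of_nonneg_left hEfin hqR.le
            _ = 160 * q * M * (1 + J * M ^ 2 * |β|) := by ring
  · have hNM : ((⌊M⌋₊:ℕ):ℝ) ≤ M := Nat.floor_le hM.le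
    have hqR : (0:ℝ) < q := by exact_mod_cast hq
    have hS : ‖(∑ m ∈ Finset.Icc 1 ⌊M⌋₊, ∑ n ∈ Finset.Icc 1 ⌊M⌋₊,
        Complex.exp (2 * Real.pi * Complex.I *
          (((b₁ * m ^ 2 + b₂ * m * n + b₃ * n ^ 2 : ℤ) : ℂ) *
            (((a : ℝ) / q + β : ℝ) : ℂ))))‖ ≤ M * M := by
      calc ‖_‖ ≤ ∑ m ∈ Finset.Icc 1 ⌊M⌋₊, ‖∑ n ∈ Finset.Icc 1 ⌊M⌋₊,
            Complex.exp (2 * Real.pi * Complex.I *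
              (((b₁ * m ^ 2 + b₂ * m * n + b₃ * n ^ 2 : ℤ) : ℂ) *
                (((a : ℝ) / q + β : ℝ) : ℂ)))‖ := norm_sum_le _ _
        _ ≤ ∑ m ∈ Finset.Icc 1 ⌊M⌋₊, (M : ℝ) := by
            apply Finset.sum_le_sum
            intro m _
            calc ‖∑ n ∈ Finset.Icc 1 ⌊M⌋₊, Complex.exp (2 * Real.pi * Complex.I *
                  (((b₁ * m ^ 2 + b₂ * m * n + b₃ * n ^ 2 : ℤ) : ℂ) *
                    (((a : ℝ) / q + β : ℝ) : ℂ)))‖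
                ≤ ∑ n ∈ Finset.Icc 1 ⌊M⌋₊, (1:ℝ) :=
                  norm_sum_le_of_le _ (fun n _ => le_of_eq (norm_exp_int_mul _ _))
              _ = (⌊M⌋₊ : ℝ) := by simp [Nat.card_Icc]
              _ ≤ M := hNM
        _ = (⌊M⌋₊ : ℝ) * M := by simp [Nat.card_Icc]
        _ ≤ M * M := mul_le_mul_of_nonneg_right hNM hM.le
    have hI : ‖∫ x in (0:ℝ)..M, ∫ y in (0:ℝ)..M,
        Complex.exp (2 * Real.pi * Complex.I *
          ((((b₁ : ℝ) * x ^ 2 + (b₂ : ℝ) * x * y + (b₃ : ℝ) * y ^ 2) * β : ℝ) : ℂ))‖ ≤ M * M := by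
      have := intervalIntegral.norm_integral_le_of_norm_le_const (C := M)
        (f := fun x => ∫ y in (0:ℝ)..M, Complex.exp (2 * Real.pi * Complex.I *
          ((((b₁ : ℝ) * x ^ 2 + (b₂ : ℝ) * x * y + (b₃ : ℝ) * y ^ 2) * β : ℝ) : ℂ)))
        (a := 0) (b := M) ?_
      · rw [sub_zero, abs_of_pos hM] at this
        linarith [this]
      · intro x hx
        have h1 : ‖∫ y in (0:ℝ)..M, Complex.exp (2 * Real.pi * Complex.I *
            ((((b₁ : ℝ) * x ^ 2 + (b₂ : ℝ) * x * y + (b₃ : ℝ) * y ^ 2) * β : ℝ) : ℂ))‖ ≤ 1 * |M - 0| :=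
          intervalIntegral.norm_integral_le_of_norm_le_const
            (fun y _ => le_of_eq (norm_exp_real _))
        rw [sub_zero, abs_of_pos hM, one_mul] at h1
        exact h1
    have hG : ‖(∑ r ∈ Finset.range q, ∑ s ∈ Finset.range q,
        Complex.exp (2 * Real.pi * Complex.I *
          (((b₁ * r ^ 2 + b₂ * r * s + b₃ * s ^ 2 : ℤ) : ℂ) * a / q)))‖ ≤ (q:ℝ) * q := by
      calc ‖_‖ ≤ ∑ r ∈ Finset.range q, ‖∑ s ∈ Finset.range q,
            Complex.exp (2 * Real.pi * Complex.I *
              (((b₁ * r ^ 2 + b₂ * r * s + b₃ * s ^ 2 : ℤ) : ℂ) * a / q))‖ := norm_sum_le _ _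
        _ ≤ ∑ r ∈ Finset.range q, (q:ℝ) := by
            apply Finset.sum_le_sum
            intro r _
            calc ‖_‖ ≤ ∑ s ∈ Finset.range q, (1:ℝ) :=
                  norm_sum_le_of_le _ (fun s _ => le_of_eq (norm_exp_gauss _ _ _))
              _ = (q:ℝ) := by simp
        _ = (q:ℝ) * q := by simp [mul_comm]
    have hq2 : ‖((q:ℂ)^2)⁻¹‖ = ((q:ℝ)^2)⁻¹ := by
      rw [norm_inv, norm_pow]
      simp
    have hprod : ‖((q : ℂ) ^ 2)⁻¹ * (∑ r ∈ Finset.range q, ∑ s ∈ Finset.range q,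
          Complex.exp (2 * Real.pi * Complex.I *
            (((b₁ * r ^ 2 + b₂ * r * s + b₃ * s ^ 2 : ℤ) : ℂ) * a / q))) *
        ∫ x in (0:ℝ)..M, ∫ y in (0:ℝ)..M,
          Complex.exp (2 * Real.pi * Complex.I *
            ((((b₁ : ℝ) * x ^ 2 + (b₂ : ℝ) * x * y + (b₃ : ℝ) * y ^ 2) * β : ℝ) : ℂ))‖
        ≤ M * M := by
      rw [norm_mul, norm_mul, hq2]
      calc ((q:ℝ)^2)⁻¹ * ‖_‖ * ‖_‖ ≤ ((q:ℝ)^2)⁻¹ * ((q:ℝ)*q) * (M*M) := by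
            apply mul_le_mul _ hI (norm_nonneg _) (by positivity)
            exact mul_le_mul_of_nonneg_left hG (by positivity)
        _ = M * M := by field_simp
    have hJ0 : (0:ℝ) ≤ (|(b₁ : ℝ)| + |(b₂ : ℝ)| + |(b₃ : ℝ)|) * M ^ 2 * |β| := by positivity
    calc ‖_ - _‖ ≤ ‖_‖ + ‖_‖ := norm_sub_le _ _
      _ ≤ M * M + M * M := add_le_add hS hprod
      _ ≤ 2 * (q * M) := by nlinarith
      _ ≤ 160 * q * M * 1 := by nlinarith
      _ ≤ 160 * q * M * (1 + (|(b₁ : ℝ)| + |(b₂ : ℝ)| + |(b₃ : ℝ)|) * M ^ 2 * |β|) := by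
          nlinarith [mul_nonneg (mul_nonneg (mul_nonneg (by norm_num : (0:ℝ) ≤ 160) hqR.le) hM.le) hJ0]
end

section
/- Let f: ℤ → ℂ have finite support, define f̂(α) = ∑_{n∈ℤ} f(n)e^{-2πinα}, and let M_r(f) = {α ∈ [0,1) : ∃ a with gcd(a,r)=1, |α - a/r| < ε} for fixed ε > 0 small enough that these sets are pairwise disjoint for distinct reduced fractions with denominators at most Q, and let M'_q = ∪_{r|q} M_r. Then for any Q ∈ ℕ, max_{q≤Q} ∫_{M'_q} |f̂(α)|² dα ≥ (1/2)·∑_{q=1}^{Q} q⁻¹ ∫_{M_q} |f̂(α)|² dα. -/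
/-!
Summing `∫_{M'_q} |f̂|²` over `q ≤ Q` counts each arc `M_r` exactly `⌊Q/r⌋ ≥ Q/(2r)` times,
because the arcs `M_r`, `r ≤ Q`, are pairwise disjoint: distinct reduced fractions with
denominators `r, s ≤ Q` are at least `1/(rs) ≥ 1/Q²` apart. So the average over `q ≤ Q` of
`∫_{M'_q} |f̂|²` is at least `(1/2) ∑ r⁻¹ ∫_{M_r} |f̂|²`, and some `q` reaches the average.
-/

open Finset MeasureTheory

/-- Fourier transform on ℤ of a finitely supported function. -/
noncomputable def fourierTransformZ (f : ℤ → ℂ) (α : ℝ) : ℂ :=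
  ∑' n : ℤ, f n * Complex.exp (-(2 * Real.pi * Complex.I) * n * α)

/-- Major arc `M_r`: points of `[0,1)` within `ε` of a reduced fraction `a/r`. -/
def majorArcSet (ε : ℝ) (r : ℕ) : Set ℝ :=
  {α | α ∈ Set.Ico (0 : ℝ) 1 ∧ ∃ a : ℤ, Int.gcd a r = 1 ∧ |α - (a : ℝ) / r| < ε}

theorem fourierTransformZ_eq_sum {f : ℤ → ℂ} (hf : (Function.support f).Finite) (α : ℝ) :
    fourierTransformZ f α =
      ∑ n ∈ hf.toFinset, f n * Complex.exp (-(2 * Real.pi * Complex.I) * n * α) :=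
  tsum_eq_sum fun n hn ↦ by
    rw [Function.notMem_support.mp fun h ↦ hn (hf.mem_toFinset.mpr h), zero_mul]

theorem continuous_fourierTransformZ {f : ℤ → ℂ} (hf : (Function.support f).Finite) :
    Continuous (fourierTransformZ f) := by
  simp only [funext (fourierTransformZ_eq_sum hf)]
  fun_prop

theorem majorArcSet_eq (ε : ℝ) (r : ℕ) :
    majorArcSet ε r =
      Set.Ico 0 1 ∩ ⋃ (a : ℤ) (_ : Int.gcd a r = 1), Metric.ball ((a : ℝ) / r) ε := by
  ext α
  simp [majorArcSet, Real.dist_eq]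

theorem measurableSet_majorArcSet (ε : ℝ) (r : ℕ) : MeasurableSet (majorArcSet ε r) := by
  rw [majorArcSet_eq]
  exact measurableSet_Ico.inter (.iUnion fun _ ↦ .iUnion fun _ ↦ measurableSet_ball)

theorem eq_of_mul_eq_mul_of_gcd_eq_one {a b : ℤ} {r s : ℕ} (ha : Int.gcd a r = 1)
    (hb : Int.gcd b s = 1) (h : a * s = b * r) : r = s := by
  have hrs : (r : ℤ) ∣ s :=
    (Int.isCoprime_iff_gcd_eq_one.mpr ha).symm.dvd_of_dvd_mul_left ⟨b, by rw [h, mul_comm]⟩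
  have hsr : (s : ℤ) ∣ r :=
    (Int.isCoprime_iff_gcd_eq_one.mpr hb).symm.dvd_of_dvd_mul_left ⟨a, by rw [← h, mul_comm]⟩
  exact_mod_cast Int.dvd_antisymm (by positivity) (by positivity) hrs hsr

theorem one_le_mul_abs_div_sub_div {a b : ℤ} {r s : ℕ} (hr : 0 < r) (hs : 0 < s) (hrs : r ≠ s)
    (ha : Int.gcd a r = 1) (hb : Int.gcd b s = 1) :
    1 ≤ r * s * |(a : ℝ) / r - b / s| := by
  have hne : a * s - b * r ≠ 0 :=
    sub_ne_zero.mpr fun h ↦ hrs (eq_of_mul_eq_mul_of_gcd_eq_one ha hb h)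
  have hr' : (0 : ℝ) < r := by exact_mod_cast hr
  have hs' : (0 : ℝ) < s := by exact_mod_cast hs
  calc (1 : ℝ) ≤ |((a * s - b * r : ℤ) : ℝ)| := by exact_mod_cast Int.one_le_abs hne
    _ = r * s * |(a : ℝ) / r - b / s| := by
      rw [← abs_of_pos (mul_pos hr' hs'), ← abs_mul]
      congr 1
      push_cast
      field_simp

theorem pairwiseDisjoint_majorArcSet {ε : ℝ} {Q : ℕ} (h : 2 * (Q : ℝ) ^ 2 * ε < 1) :
    (Set.Icc 1 Q).PairwiseDisjoint (majorArcSet ε) := by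
  rintro r ⟨hr, hrQ⟩ s ⟨hs, hsQ⟩ hrs
  refine Set.disjoint_left.mpr ?_
  rintro α ⟨-, a, ha, haα⟩ ⟨-, b, hb, hbα⟩
  have hε : 0 < ε := (abs_nonneg _).trans_lt haα
  have hsep := one_le_mul_abs_div_sub_div hr hs hrs ha hb
  have hclose : |(a : ℝ) / r - b / s| < 2 * ε := by
    calc |(a : ℝ) / r - b / s| ≤ |(a : ℝ) / r - α| + |α - b / s| := abs_sub_le ..
      _ < 2 * ε := by rw [abs_sub_comm]; linarith
  have hrs_le : (r : ℝ) * s ≤ Q ^ 2 := by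
    rw [sq]
    exact mul_le_mul (by exact_mod_cast hrQ) (by exact_mod_cast hsQ) (by positivity)
      (by positivity)
  nlinarith [abs_nonneg ((a : ℝ) / r - b / s)]

theorem integral_biUnion_divisors_majorArcSet {g : ℝ → ℝ} (hg : IntegrableOn g (Set.Ico 0 1))
    {ε : ℝ} {q Q : ℕ} (hq : 0 < q) (hqQ : q ≤ Q) (h : 2 * (Q : ℝ) ^ 2 * ε < 1) :
    ∫ α in ⋃ r ∈ q.divisors, majorArcSet ε r, g α =
      ∑ r ∈ q.divisors, ∫ α in majorArcSet ε r, g α := by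
  refine integral_biUnion_finset _ (fun r _ ↦ measurableSet_majorArcSet ε r) ?_
    fun r _ ↦ hg.mono_set fun _ hα ↦ hα.1
  refine (pairwiseDisjoint_majorArcSet h).subset fun r hr ↦ ?_
  have hrq := Nat.mem_divisors.mp hr
  exact ⟨Nat.pos_of_dvd_of_pos hrq.1 hq, (Nat.le_of_dvd hq hrq.1).trans hqQ⟩

theorem sum_Icc_sum_divisors_eq_sum_div_nsmul {M : Type*} [AddCommMonoid M] (Q : ℕ)
    (F : ℕ → M) :
    ∑ q ∈ Icc 1 Q, ∑ r ∈ q.divisors, F r = ∑ r ∈ Icc 1 Q, (Q / r) • F r := by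
  rw [sum_comm' (t' := Icc 1 Q) (s' := fun r ↦ {q ∈ Icc 1 Q | r ∣ q})]
  · refine sum_congr rfl fun r _ ↦ ?_
    rw [sum_const, ← Nat.Ioc_filter_dvd_card_eq_div]
    rfl
  · intro q r
    simp only [mem_Icc, Nat.mem_divisors, mem_filter]
    constructor
    · rintro ⟨⟨hq, hqQ⟩, hrq, -⟩
      exact ⟨⟨⟨hq, hqQ⟩, hrq⟩, Nat.pos_of_dvd_of_pos hrq hq, (Nat.le_of_dvd hq hrq).trans hqQ⟩
    · rintro ⟨⟨hqQ, hrq⟩, -⟩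
      exact ⟨hqQ, hrq, by omega⟩

theorem inv_two_mul_le_div_div {r Q : ℕ} (hr : 0 < r) (hrQ : r ≤ Q) :
    (2 * r : ℝ)⁻¹ ≤ ((Q / r : ℕ) : ℝ) / Q := by
  have hlt := Nat.lt_mul_div_succ Q hr
  have hle : r ≤ r * (Q / r) := Nat.le_mul_of_pos_right r (Nat.div_pos hrQ hr)
  have hQ : Q ≤ 2 * r * (Q / r) := by rw [mul_add_one] at hlt; linarith
  rw [le_div_iff₀ (by exact_mod_cast hr.trans_le hrQ), inv_mul_le_iff₀ (by positivity)]
  exact_mod_cast hQ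

theorem major_arc_L2_pigeonhole_general (f : ℤ → ℂ) (hf : (Function.support f).Finite)
    (ε : ℝ) (Q : ℕ) (hQ : 1 ≤ Q) (hdisj : 2 * (Q : ℝ) ^ 2 * ε < 1) :
    ∃ q : ℕ, 1 ≤ q ∧ q ≤ Q ∧
      (1 / 2) * ∑ r ∈ Finset.Icc 1 Q, (r : ℝ)⁻¹ *
          ∫ α in majorArcSet ε r, ‖fourierTransformZ f α‖ ^ 2
        ≤ ∫ α in (⋃ r ∈ Nat.divisors q, majorArcSet ε r),
            ‖fourierTransformZ f α‖ ^ 2 := by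
  set g : ℝ → ℝ := fun α ↦ ‖fourierTransformZ f α‖ ^ 2
  set I : ℕ → ℝ := fun r ↦ ∫ α in majorArcSet ε r, g α
  set J : ℕ → ℝ := fun q ↦ ∫ α in ⋃ r ∈ q.divisors, majorArcSet ε r, g α
  have hg : IntegrableOn g (Set.Ico 0 1) :=
    ((continuous_fourierTransformZ hf).norm.pow 2).integrableOn_Icc.mono_set
      Set.Ico_subset_Icc_self
  have hJ : ∑ q ∈ Icc 1 Q, J q = ∑ r ∈ Icc 1 Q, (Q / r) • I r := by
    rw [← sum_Icc_sum_divisors_eq_sum_div_nsmul]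
    refine sum_congr rfl fun q hq ↦ ?_
    obtain ⟨hq, hqQ⟩ := mem_Icc.mp hq
    exact integral_biUnion_divisors_majorArcSet hg hq hqQ hdisj
  obtain ⟨q, hq, hJq⟩ := exists_le_of_le_expect (nonempty_Icc.mpr hQ) le_rfl (f := J)
  refine ⟨q, (mem_Icc.mp hq).1, (mem_Icc.mp hq).2, le_trans ?_ hJq⟩
  calc 1 / 2 * ∑ r ∈ Icc 1 Q, (r : ℝ)⁻¹ * I r
      ≤ ∑ r ∈ Icc 1 Q, ((Q / r : ℕ) : ℝ) / Q * I r := by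
        rw [mul_sum]
        refine sum_le_sum fun r hr ↦ ?_
        obtain ⟨hr, hrQ⟩ := mem_Icc.mp hr
        rw [← mul_assoc, one_div, ← mul_inv]
        exact mul_le_mul_of_nonneg_right (inv_two_mul_le_div_div hr hrQ)
          (setIntegral_nonneg (measurableSet_majorArcSet ε r) fun α _ ↦ by positivity)
    _ = (Icc 1 Q).expect J := by
        rw [expect_eq_sum_div_card, hJ, Nat.card_Icc, add_tsub_cancel_right, sum_div]
        simp only [nsmul_eq_mul, div_mul_eq_mul_div]

theorem major_arc_L2_pigeonhole (f : ℤ → ℂ) (hf : (Function.support f).Finite)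
    (ε : ℝ) (hε : 0 < ε) (Q : ℕ) (hQ : 1 ≤ Q) (hdisj : 2 * (Q : ℝ) ^ 2 * ε < 1) :
    ∃ q : ℕ, 1 ≤ q ∧ q ≤ Q ∧
      (1 / 2) * ∑ r ∈ Finset.Icc 1 Q, (r : ℝ)⁻¹ *
          ∫ α in majorArcSet ε r, ‖fourierTransformZ f α‖ ^ 2
        ≤ ∫ α in (⋃ r ∈ Nat.divisors q, majorArcSet ε r),
            ‖fourierTransformZ f α‖ ^ 2 :=
  major_arc_L2_pigeonhole_general f hf ε Q hQ hdisj
end
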